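/- arXiv:1504.01577 — 7 statements merged into one kernel-verified Lean document; each statement's English description precedes it below -/
import Mathlib

section
/- Let (P_n)_{n≥1}, (Q_n)_{n≥1}, (R_n)_{n≥1} be sequences of real polynomials such that (n-scalability) there exist fixed polynomials P, Q ∈ ℝ[X] with P_n = (n/(n+1))·P and Q_n = ((n−1)/(n+1))·Q for all n ≥ 1, and (θ*-stationarity) 1 − P_n − Q_n = X·R_n holds as an identity in ℝ[X] for all n ≥ 1. Then there exist polynomials Ā, B̄ ∈ ℝ[X] such that for all n ≥ 1: P_n = (2n/(n+1))·(1 − ((Ā + B̄)/2)·X), Q_n = −((n−1)/(n+1))·(1 − B̄·X), and R_n = (n·Ā + B̄)/(n+1). -/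
/-!
Multiplying the θ*-stationarity identity at step `n` by `n + 1` turns it into the identity
`(n + 1) X Rₙ = (n + 1) - n P - (n - 1) Q`, affine in `n`. Its instances `n = 1` and `n = 2`
express `P` and `Q` through `R₁` and `R₂`: `P = 2 (1 - X R₁)` and `Q = -(1 - X B̄)` with
`B̄ = 4 R₁ - 3 R₂`.
Substituting back, the right-hand side is `X (n Ā + B̄)` with `Ā = 2 R₁ - B̄`, and `X` cancels.
-/

open Polynomial

namespace Polynomial

variable {K : Type*} [Field K] [CharZero K]

/-- θ*-stationarity of the `n`-scaled coefficients `Pₙ = n / (n + 1) • P`,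
`Qₙ = (n - 1) / (n + 1) • Q`. -/
def ScaledStationary (P Q R : K[X]) (n : ℕ) : Prop :=
  1 - ((n : K) / (n + 1)) • P - (((n : K) - 1) / (n + 1)) • Q = X * R

namespace ScaledStationary

variable {P Q R : K[X]} {n : ℕ}

theorem succ_smul_X_mul (h : ScaledStationary P Q R n) :
    ((n : K) + 1) • (X * R) = ((n : K) + 1) • 1 - (n : K) • P - ((n : K) - 1) • Q := by
  have hn : (n : K) + 1 ≠ 0 := Nat.cast_add_one_ne_zero n
  rw [← h, smul_sub, smul_sub, smul_smul, smul_smul, mul_div_cancel₀ _ hn,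
    mul_div_cancel₀ _ hn]

theorem eq_of_one_two {R₁ R₂ : K[X]} (h₁ : ScaledStationary P Q R₁ 1)
    (h₂ : ScaledStationary P Q R₂ 2) :
    P = (2 : K) • (1 - X * R₁) ∧ Q = -(1 - X * ((4 : K) • R₁ - (3 : K) • R₂)) := by
  have e₁ := h₁.succ_smul_X_mul
  have e₂ := h₂.succ_smul_X_mul
  push_cast at e₁ e₂
  have hP : P = (2 : K) • (1 - X * R₁) := by
    linear_combination (norm := module) e₁
  refine ⟨hP, ?_⟩
  rw [mul_sub, mul_smul_comm, mul_smul_comm]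
  linear_combination (norm := module) e₂ - (2 : K) • hP

theorem eq_inv_smul {U B : K[X]} (hP : P = (2 : K) • (1 - X * U)) (hQ : Q = -(1 - X * B))
    (h : ScaledStationary P Q R n) :
    R = ((n : K) + 1)⁻¹ • ((n : K) • ((2 : K) • U - B) + B) := by
  have hn : (n : K) + 1 ≠ 0 := Nat.cast_add_one_ne_zero n
  refine mul_left_cancel₀ X_ne_zero (smul_right_injective K[X] hn ?_)
  dsimp only
  rw [h.succ_smul_X_mul, hP, hQ, mul_smul_comm, smul_inv_smul₀ hn,
    mul_add, mul_smul_comm, mul_sub, mul_smul_comm]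
  module

end ScaledStationary

end Polynomial

/-- Theorem 1 of the paper: under n-scalability and θ*-stationarity, the polynomial
coefficients of a second-order iterative algorithm have the stated form. -/
theorem stmt_0 (P Q R : ℕ → Polynomial ℝ)
    (hscal : ∃ Pb Qb : Polynomial ℝ, ∀ n : ℕ, 1 ≤ n →
      P n = ((n : ℝ) / ((n : ℝ) + 1)) • Pb ∧
      Q n = (((n : ℝ) - 1) / ((n : ℝ) + 1)) • Qb)
    (hstat : ∀ n : ℕ, 1 ≤ n → (1 : Polynomial ℝ) - P n - Q n = Polynomial.X * R n) :
    ∃ Abar Bbar : Polynomial ℝ, ∀ n : ℕ, 1 ≤ n →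
      P n = (2 * (n : ℝ) / ((n : ℝ) + 1)) •
        ((1 : Polynomial ℝ) - ((1 : ℝ) / 2) • ((Abar + Bbar) * Polynomial.X)) ∧
      Q n = -((((n : ℝ) - 1) / ((n : ℝ) + 1)) •
        ((1 : Polynomial ℝ) - Bbar * Polynomial.X)) ∧
      R n = (((n : ℝ) + 1)⁻¹) • ((n : ℝ) • Abar + Bbar) := by
  obtain ⟨Pb, Qb, hPQ⟩ := hscal
  have hst : ∀ n, 1 ≤ n → ScaledStationary Pb Qb (R n) n := fun n hn => by
    rw [ScaledStationary, ← (hPQ n hn).1, ← (hPQ n hn).2]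
    exact hstat n hn
  obtain ⟨hPb, hQb⟩ := (hst 1 le_rfl).eq_of_one_two (hst 2 one_le_two)
  set Bbar := (4 : ℝ) • R 1 - (3 : ℝ) • R 2
  refine ⟨(2 : ℝ) • R 1 - Bbar, Bbar, fun n hn => ⟨?_, ?_, (hst n hn).eq_inv_smul hPb hQb⟩⟩
  · rw [(hPQ n hn).1, hPb, sub_add_cancel, smul_mul_assoc, mul_comm (X : ℝ[X])]
    module
  · rw [(hPQ n hn).2, hQb, smul_neg, mul_comm (X : ℝ[X])]
end

section
/- Let d ≥ 1, let g : ℝ^d → ℝ^d be any map, let γ ∈ ℝ and ψ_1 ∈ ℝ^d. Define ψ_{n+1} = ψ_n − γ g(ψ_n) for n ≥ 1, and define the averages θ_n = (1/n) ∑_{i=1}^n ψ_i for n ≥ 1, with the convention θ_0 = ψ_1. Then for all n ≥ 1: θ_{n+1} = (2n/(n+1)) θ_n − ((n−1)/(n+1)) θ_{n−1} − (γ/(n+1)) g(n θ_n − (n−1) θ_{n−1}). In other words, averaged gradient descent coincides with the second-order recursion (6) with parameters α = 0 and β = γ. -/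
/-!
Write `Sₙ = ∑_{i ≤ n} ψᵢ = n θₙ`. Then `ψₙ = Sₙ - Sₙ₋₁ = n θₙ - (n - 1) θₙ₋₁` (for `n = 1` the
coefficient of `θ₀` vanishes), and `(n + 1) θₙ₊₁ = Sₙ + ψₙ₊₁ = n θₙ + ψₙ - γ g(ψₙ)`; substituting
the expression for `ψₙ` gives the second-order recursion.
-/

open Finset

section Averages

variable {K E : Type*} [Field K] [CharZero K] [AddCommGroup E] [Module K E] {ψ θ : ℕ → E}

theorem natCast_smul_average_eq_sum
    (hθ : ∀ n : ℕ, 1 ≤ n → θ n = (n : K)⁻¹ • ∑ i ∈ Icc 1 n, ψ i) (n : ℕ) :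
    (n : K) • θ n = ∑ i ∈ Icc 1 n, ψ i := by
  rcases Nat.eq_zero_or_pos n with rfl | hn
  · simp
  · rw [hθ n hn, smul_smul, mul_inv_cancel₀ (Nat.cast_ne_zero.mpr hn.ne'), one_smul]

theorem natCast_smul_average_sub_pred
    (hθ : ∀ n : ℕ, 1 ≤ n → θ n = (n : K)⁻¹ • ∑ i ∈ Icc 1 n, ψ i) {n : ℕ} (hn : 1 ≤ n) :
    (n : K) • θ n - ((n : K) - 1) • θ (n - 1) = ψ n := by
  obtain ⟨m, rfl⟩ := Nat.exists_eq_add_of_le' hn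
  have hm : ((m + 1 : ℕ) : K) - 1 = m := by push_cast; ring
  rw [hm, Nat.add_sub_cancel, natCast_smul_average_eq_sum hθ, natCast_smul_average_eq_sum hθ,
    sum_Icc_succ_top (by omega), add_sub_cancel_left]

theorem average_succ
    (hθ : ∀ n : ℕ, 1 ≤ n → θ n = (n : K)⁻¹ • ∑ i ∈ Icc 1 n, ψ i) (n : ℕ) :
    θ (n + 1) = ((n : K) + 1)⁻¹ • ((n : K) • θ n + ψ (n + 1)) := by
  rw [hθ (n + 1) (by omega), natCast_smul_average_eq_sum hθ, sum_Icc_succ_top (by omega),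
    Nat.cast_succ]

theorem averaged_gradient_descent_recursion (g : E → E) (γ : K)
    (hψ : ∀ n : ℕ, 1 ≤ n → ψ (n + 1) = ψ n - γ • g (ψ n))
    (hθ : ∀ n : ℕ, 1 ≤ n → θ n = (n : K)⁻¹ • ∑ i ∈ Icc 1 n, ψ i) {n : ℕ} (hn : 1 ≤ n) :
    θ (n + 1) = (2 * (n : K) / ((n : K) + 1)) • θ n
        - (((n : K) - 1) / ((n : K) + 1)) • θ (n - 1)
        - (γ / ((n : K) + 1)) • g ((n : K) • θ n - ((n : K) - 1) • θ (n - 1)) := by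
  rw [average_succ hθ, hψ n hn, ← natCast_smul_average_sub_pred hθ hn]
  have := Nat.cast_add_one_ne_zero (R := K) n
  match_scalars <;> field_simp
  ring

end Averages

theorem stmt_1_general (d : ℕ) (g : (Fin d → ℝ) → (Fin d → ℝ)) (γ : ℝ)
    (ψ θ : ℕ → Fin d → ℝ)
    (hψ : ∀ n : ℕ, 1 ≤ n → ψ (n + 1) = ψ n - γ • g (ψ n))
    (hθ : ∀ n : ℕ, 1 ≤ n → θ n = ((n : ℝ))⁻¹ • ∑ i ∈ Finset.Icc 1 n, ψ i) :
    ∀ n : ℕ, 1 ≤ n →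
      θ (n + 1) = (2 * (n : ℝ) / ((n : ℝ) + 1)) • θ n
        - (((n : ℝ) - 1) / ((n : ℝ) + 1)) • θ (n - 1)
        - (γ / ((n : ℝ) + 1)) • g ((n : ℝ) • θ n - ((n : ℝ) - 1) • θ (n - 1)) :=
  fun _ hn => averaged_gradient_descent_recursion g γ hψ hθ hn

/-- Averaged gradient descent coincides with the second-order recursion (6)
with parameters α = 0 and β = γ. -/
theorem stmt_1 (d : ℕ) (hd : 1 ≤ d) (g : (Fin d → ℝ) → (Fin d → ℝ)) (γ : ℝ)
    (ψ θ : ℕ → Fin d → ℝ)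
    (hψ : ∀ n : ℕ, 1 ≤ n → ψ (n + 1) = ψ n - γ • g (ψ n))
    (hθ0 : θ 0 = ψ 1)
    (hθ : ∀ n : ℕ, 1 ≤ n → θ n = ((n : ℝ))⁻¹ • ∑ i ∈ Finset.Icc 1 n, ψ i) :
    ∀ n : ℕ, 1 ≤ n →
      θ (n + 1) = (2 * (n : ℝ) / ((n : ℝ) + 1)) • θ n
        - (((n : ℝ) - 1) / ((n : ℝ) + 1)) • θ (n - 1)
        - (γ / ((n : ℝ) + 1)) • g ((n : ℝ) • θ n - ((n : ℝ) - 1) • θ (n - 1)) :=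
  stmt_1_general d g γ ψ θ hψ hθ
end

section
/- Let H be a d×d real matrix, q ∈ ℝ^d, θ* ∈ ℝ^d with H θ* = q, and let f'(θ) = Hθ − q. Let α, β ∈ ℝ satisfy nα + β ≠ 0 for all n ≥ 1. Let (θ_n)_{n≥0} be any sequence in ℝ^d with θ_1 = θ_0 and set η_n = n(θ_n − θ*). Then (θ_n) satisfies, for all n ≥ 1, θ_{n+1} = (2n/(n+1)) θ_n − ((n−1)/(n+1)) θ_{n−1} − ((nα+β)/(n+1)) f'((n(α+β)/(nα+β)) θ_n − ((n−1)β/(nα+β)) θ_{n−1}) if and only if (η_n) satisfies, for all n ≥ 1, η_{n+1} = (I − αH) η_n + (I − βH)(η_n − η_{n−1}). -/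
/-!
The extrapolation coefficients in (6) differ by exactly one, so the gradient is evaluated at
`θ* + c (θ_n - θ*) - c' (θ_{n-1} - θ*)`; since `f'(θ) = H (θ - θ*)`, multiplying by `nα + β`
turns the gradient term into `H (α η_n + β (η_n - η_{n-1}))`. Multiplying (6) by `n + 1`
then gives `η_{n+1} = 2 η_n - η_{n-1} - α H η_n - β H (η_n - η_{n-1})`, one step at a time.
-/

section SecondOrderStep

variable {K E : Type*} [Field K] [AddCommGroup E] [Module K E] (A : E →ₗ[K] E)

theorem smul_map_extrapolation_sub {t α β : K} (h : t * α + β ≠ 0) (x y θstar : E) :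
    (t * α + β) • (A ((t * (α + β) / (t * α + β)) • y - ((t - 1) * β / (t * α + β)) • x)
        - A θstar)
      = α • A (t • (y - θstar)) + β • A (t • (y - θstar) - (t - 1) • (x - θstar)) := by
  simp only [map_sub, map_smul, smul_sub]
  match_scalars <;> field_simp
  ring

theorem secondOrderStep_iff {t α β : K} (ht : t + 1 ≠ 0) (h : t * α + β ≠ 0)
    (x y z θstar : E) :
    z = (2 * t / (t + 1)) • y - ((t - 1) / (t + 1)) • x
        - ((t * α + β) / (t + 1)) •
          (A ((t * (α + β) / (t * α + β)) • y - ((t - 1) * β / (t * α + β)) • x) - A θstar)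
      ↔ (t + 1) • (z - θstar)
        = (t • (y - θstar) - α • A (t • (y - θstar)))
          + ((t • (y - θstar) - (t - 1) • (x - θstar))
            - β • A (t • (y - θstar) - (t - 1) • (x - θstar))) := by
  rw [← sub_left_inj (a := θstar) (b := z), ← (smul_right_injective E ht).eq_iff (a := z - θstar)]
  refine Eq.congr_right ?_
  calc _ = (2 * t) • (y - θstar) - (t - 1) • (x - θstar) - (t * α + β) •
          (A ((t * (α + β) / (t * α + β)) • y - ((t - 1) * β / (t * α + β)) • x) - A θstar) := by
        match_scalars <;> field_simp
        ring
    _ = _ := by rw [smul_map_extrapolation_sub A h]; module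

end SecondOrderStep

theorem stmt_3_general (d : ℕ) (H : Matrix (Fin d) (Fin d) ℝ)
    (q θstar : Fin d → ℝ) (hθstar : H.mulVec θstar = q)
    (α β : ℝ) (hαβ : ∀ n : ℕ, 1 ≤ n → (n : ℝ) * α + β ≠ 0)
    (θ : ℕ → Fin d → ℝ)
    (η : ℕ → Fin d → ℝ) (hη : ∀ n, η n = (n : ℝ) • (θ n - θstar)) :
    (∀ n : ℕ, 1 ≤ n →
      θ (n + 1) = (2 * (n : ℝ) / ((n : ℝ) + 1)) • θ n
        - (((n : ℝ) - 1) / ((n : ℝ) + 1)) • θ (n - 1)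
        - ((((n : ℝ) * α + β) / ((n : ℝ) + 1)) •
            (H.mulVec (((n : ℝ) * (α + β) / ((n : ℝ) * α + β)) • θ n
              - (((n : ℝ) - 1) * β / ((n : ℝ) * α + β)) • θ (n - 1)) - q)))
    ↔
    (∀ n : ℕ, 1 ≤ n →
      η (n + 1) = (η n - α • H.mulVec (η n))
        + ((η n - η (n - 1)) - β • H.mulVec (η n - η (n - 1)))) := by
  subst hθstar
  refine forall_congr' fun n => imp_congr_right fun hn => ?_
  simp only [hη, Nat.cast_succ, Nat.cast_pred hn]
  exact secondOrderStep_iff H.mulVecLin (by positivity) (hαβ n hn) _ _ _ _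

/-- The second-order gradient recursion (6) on θ is equivalent to the constant-coefficient
recursion η_{n+1} = (I - αH)η_n + (I - βH)(η_n - η_{n-1}) on η_n = n(θ_n - θ*). -/
theorem stmt_3 (d : ℕ) (hd : 1 ≤ d) (H : Matrix (Fin d) (Fin d) ℝ)
    (q θstar : Fin d → ℝ) (hθstar : H.mulVec θstar = q)
    (α β : ℝ) (hαβ : ∀ n : ℕ, 1 ≤ n → (n : ℝ) * α + β ≠ 0)
    (θ : ℕ → Fin d → ℝ) (hθ1 : θ 1 = θ 0)
    (η : ℕ → Fin d → ℝ) (hη : ∀ n, η n = (n : ℝ) • (θ n - θstar)) :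
    (∀ n : ℕ, 1 ≤ n →
      θ (n + 1) = (2 * (n : ℝ) / ((n : ℝ) + 1)) • θ n
        - (((n : ℝ) - 1) / ((n : ℝ) + 1)) • θ (n - 1)
        - ((((n : ℝ) * α + β) / ((n : ℝ) + 1)) •
            (H.mulVec (((n : ℝ) * (α + β) / ((n : ℝ) * α + β)) • θ n
              - (((n : ℝ) - 1) * β / ((n : ℝ) * α + β)) • θ (n - 1)) - q)))
    ↔
    (∀ n : ℕ, 1 ≤ n →
      η (n + 1) = (η n - α • H.mulVec (η n))
        + ((η n - η (n - 1)) - β • H.mulVec (η n - η (n - 1)))) :=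
  stmt_3_general d H q θstar hθstar α β hαβ θ η hη
end

section
/- Fix real numbers α, β, h with h > 0, 0 < α ≤ 1/h and 0 ≤ β ≤ 2/h − α. Let c ∈ ℝ and let (η_n)_{n≥0} satisfy η_0 = 0, η_1 = c, η_{n+1} = (1 − αh)η_n + (1 − βh)(η_n − η_{n−1}) for n ≥ 1. Then for all n ≥ 1, η_n² ≤ 2c²/(αh). -/
/-!
With `a = αh` and `b = βh` the recurrence reads `η_{n+1} = (2 - a - b) η_n - (1 - b) η_{n-1}`.
The quadratic form `E(x, y) = (2 - b) x² + (2 - b)(1 - b)² y² - 2(2 - a - b)(1 - b) x y` evaluated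
at `(η_n, η_{n-1})` drops by exactly `a b (4 - a - 2b) η_n² ≥ 0` at every step, so it never exceeds
its initial value `(2 - b) c²`. Completing the square, `(2 - b) E(x, y) ≥ a (4 - a - 2b) x²`, and
`2 (4 - a - 2b) ≥ (2 - b)²` because `b ≤ 2 - a`; together these give `a η_n² ≤ 2 c²`.
-/

namespace HeavyBall

def energy (a b x y : ℝ) : ℝ :=
  (2 - b) * x ^ 2 + (2 - b) * (1 - b) ^ 2 * y ^ 2 - 2 * (2 - a - b) * (1 - b) * x * y

theorem energy_zero_right (a b x : ℝ) : energy a b x 0 = (2 - b) * x ^ 2 := by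
  simp [energy]

theorem energy_step (a b x y : ℝ) :
    energy a b ((1 - a) * x + (1 - b) * (x - y)) x =
      energy a b x y - a * b * (4 - a - 2 * b) * x ^ 2 := by
  unfold energy; ring

theorem mul_energy_eq (a b x y : ℝ) :
    (2 - b) * energy a b x y =
      ((2 - b) * (1 - b) * y - (2 - a - b) * x) ^ 2 + a * (4 - a - 2 * b) * x ^ 2 := by
  unfold energy; ring

variable {a b : ℝ}

theorem energy_step_le (ha : 0 ≤ a) (hb : 0 ≤ b) (hab : a + b ≤ 2) (x y : ℝ) :
    energy a b ((1 - a) * x + (1 - b) * (x - y)) x ≤ energy a b x y := by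
  have hdrop : 0 ≤ a * b * (4 - a - 2 * b) * x ^ 2 := by
    have : 0 ≤ 4 - a - 2 * b := by linarith
    positivity
  rw [energy_step]
  linarith

theorem energy_le_of_recurrence (ha : 0 ≤ a) (hb : 0 ≤ b) (hab : a + b ≤ 2) {x : ℕ → ℝ}
    (hx : ∀ n, 1 ≤ n → x (n + 1) = (1 - a) * x n + (1 - b) * (x n - x (n - 1))) :
    ∀ n, 1 ≤ n → energy a b (x n) (x (n - 1)) ≤ energy a b (x 1) (x 0) := by
  intro n hn
  induction n, hn using Nat.le_induction with
  | base => rfl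
  | succ n hn ih =>
    rw [Nat.add_sub_cancel, hx n hn]
    exact (energy_step_le ha hb hab _ _).trans ih

theorem sq_le_of_energy_le (ha : 0 < a) (hb : 0 ≤ b) (hab : a + b ≤ 2) {x y c : ℝ}
    (hE : energy a b x y ≤ (2 - b) * c ^ 2) : x ^ 2 ≤ 2 * c ^ 2 / a := by
  have hb2 : 0 < 2 - b := by linarith
  have hcoef : (2 - b) ^ 2 ≤ 2 * (4 - a - 2 * b) := by nlinarith
  have hsq : (2 - b) * (a * x ^ 2) ≤ (2 - b) * (2 * c ^ 2) := by
    have hform := mul_energy_eq a b x y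
    nlinarith [mul_le_mul_of_nonneg_left hE hb2.le,
      mul_le_mul_of_nonneg_right hcoef (mul_nonneg ha.le (sq_nonneg x))]
  rw [le_div_iff₀ ha, mul_comm]
  exact le_of_mul_le_mul_left hsq hb2

end HeavyBall

open HeavyBall in
theorem stmt_9_general (α β h c : ℝ) (hh : 0 < h) (hα0 : 0 < α)
    (hβ0 : 0 ≤ β) (hβ : β ≤ 2 / h - α)
    (η : ℕ → ℝ) (hη0 : η 0 = 0) (hη1 : η 1 = c)
    (hrec : ∀ n : ℕ, 1 ≤ n →
      η (n + 1) = (1 - α * h) * η n + (1 - β * h) * (η n - η (n - 1))) :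
    ∀ n : ℕ, 1 ≤ n → (η n) ^ 2 ≤ 2 * c ^ 2 / (α * h) := by
  have ha : 0 < α * h := mul_pos hα0 hh
  have hb : 0 ≤ β * h := mul_nonneg hβ0 hh.le
  have hab : α * h + β * h ≤ 2 := by
    have := (le_div_iff₀ hh).mp (show α + β ≤ 2 / h by linarith)
    linarith
  intro n hn
  apply sq_le_of_energy_le ha hb hab (y := η (n - 1))
  calc energy (α * h) (β * h) (η n) (η (n - 1))
      ≤ energy (α * h) (β * h) (η 1) (η 0) := energy_le_of_recurrence ha.le hb hab hrec n hn
    _ = (2 - β * h) * c ^ 2 := by rw [hη0, hη1, energy_zero_right]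

/-- First bound of Theorem 2: for 0 < α ≤ 1/h and 0 ≤ β ≤ 2/h - α,
η_n² ≤ 2c²/(αh). -/
theorem stmt_9 (α β h c : ℝ) (hh : 0 < h) (hα0 : 0 < α) (hα : α ≤ 1 / h)
    (hβ0 : 0 ≤ β) (hβ : β ≤ 2 / h - α)
    (η : ℕ → ℝ) (hη0 : η 0 = 0) (hη1 : η 1 = c)
    (hrec : ∀ n : ℕ, 1 ≤ n →
      η (n + 1) = (1 - α * h) * η n + (1 - β * h) * (η n - η (n - 1))) :
    ∀ n : ℕ, 1 ≤ n → (η n) ^ 2 ≤ 2 * c ^ 2 / (α * h) :=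
  stmt_9_general α β h c hh hα0 hβ0 hβ η hη0 hη1 hrec
end

section
/- Fix real numbers α, β, h with h > 0, 0 ≤ α ≤ 1/h, 0 ≤ β ≤ 2/h − α, and α + β > 0. Let c ∈ ℝ and let (η_n)_{n≥0} satisfy η_0 = 0, η_1 = c, η_{n+1} = (1 − αh)η_n + (1 − βh)(η_n − η_{n−1}) for n ≥ 1. Then for all n ≥ 1, η_n² ≤ 8c²n/((α+β)h). -/
/-!
For a sequence with `x (n + 2) = s * x (n + 1) - q * x n`, the quadratic form
`x (n + 1) ^ 2 - s * x (n + 1) * x n + q * x n ^ 2` is multiplied by `q` at each step, so with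
`s = 2 - a - b`, `q = 1 - b` and `0 ≤ b ≤ 2` it stays bounded in absolute value by its initial value, which is `x 1 ^ 2` when `x 0 = 0`.
For `0 ≤ a` and `a + b ≤ 2` this form also dominates
`b / 2 * (x (n + 1) ^ 2 - x n ^ 2) + a / 2 * x (n + 1) ^ 2`, which telescopes, so summing over the
first `n` steps gives `(a + b) / 2 * x n ^ 2 ≤ n * x 1 ^ 2`; here `a = α h` and `b = β h`.
-/

open Finset

def recurrenceEnergy (s q : ℝ) (x : ℕ → ℝ) (n : ℕ) : ℝ :=
  x (n + 1) ^ 2 - s * x (n + 1) * x n + q * x n ^ 2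

section RecurrenceEnergy

variable {s q : ℝ} {x : ℕ → ℝ}

theorem recurrenceEnergy_succ (hx : ∀ n, x (n + 2) = s * x (n + 1) - q * x n) (n : ℕ) :
    recurrenceEnergy s q x (n + 1) = q * recurrenceEnergy s q x n := by
  simp only [recurrenceEnergy, hx]
  ring

theorem abs_recurrenceEnergy_le (hx : ∀ n, x (n + 2) = s * x (n + 1) - q * x n)
    (hq : |q| ≤ 1) (n : ℕ) :
    |recurrenceEnergy s q x n| ≤ |recurrenceEnergy s q x 0| := by
  induction n with
  | zero => rfl
  | succ n ih =>
    rw [recurrenceEnergy_succ hx, abs_mul]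
    exact (mul_le_of_le_one_left (abs_nonneg _) hq).trans ih

theorem sum_recurrenceEnergy_le (hx : ∀ n, x (n + 2) = s * x (n + 1) - q * x n)
    (hq : |q| ≤ 1) (n : ℕ) :
    ∑ k ∈ range n, recurrenceEnergy s q x k ≤ n * |recurrenceEnergy s q x 0| := by
  calc ∑ k ∈ range n, recurrenceEnergy s q x k
      ≤ ∑ _k ∈ range n, |recurrenceEnergy s q x 0| :=
        sum_le_sum fun k _ => (le_abs_self _).trans (abs_recurrenceEnergy_le hx hq k)
    _ = n * |recurrenceEnergy s q x 0| := by rw [sum_const, card_range, nsmul_eq_mul]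

end RecurrenceEnergy

theorem le_recurrenceEnergy_heavyBall {a b : ℝ} (ha : 0 ≤ a) (hab : a + b ≤ 2)
    (x : ℕ → ℝ) (n : ℕ) :
    b / 2 * (x (n + 1) ^ 2 - x n ^ 2) + a / 2 * x (n + 1) ^ 2
      ≤ recurrenceEnergy (2 - a - b) (1 - b) x n := by
  have key : recurrenceEnergy (2 - a - b) (1 - b) x n
      - (b / 2 * (x (n + 1) ^ 2 - x n ^ 2) + a / 2 * x (n + 1) ^ 2)
      = (1 - (a + b) / 2) * (x (n + 1) - x n) ^ 2 + a / 2 * x n ^ 2 := by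
    unfold recurrenceEnergy
    ring
  have : 0 ≤ (1 - (a + b) / 2) * (x (n + 1) - x n) ^ 2 + a / 2 * x n ^ 2 :=
    add_nonneg (mul_nonneg (by linarith) (sq_nonneg _)) (mul_nonneg (by linarith) (sq_nonneg _))
  linarith

theorem mul_sq_le_of_heavyBall {a b : ℝ} (ha : 0 ≤ a) (hb : 0 ≤ b) (hab : a + b ≤ 2)
    {x : ℕ → ℝ} (hx0 : x 0 = 0)
    (hx : ∀ n, x (n + 2) = (2 - a - b) * x (n + 1) - (1 - b) * x n) (n : ℕ) :
    (a + b) / 2 * x n ^ 2 ≤ n * x 1 ^ 2 := by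
  have telescope : ∀ m, b / 2 * x m ^ 2 + a / 2 * ∑ k ∈ range m, x (k + 1) ^ 2
      ≤ ∑ k ∈ range m, recurrenceEnergy (2 - a - b) (1 - b) x k := by
    intro m
    induction m with
    | zero => simp [hx0]
    | succ m ih =>
      simp only [sum_range_succ, mul_add]
      linarith [le_recurrenceEnergy_heavyBall ha hab x m]
  have last_le_sum : x n ^ 2 ≤ ∑ k ∈ range n, x (k + 1) ^ 2 := by
    cases n with
    | zero => simp [hx0]
    | succ n =>
      rw [sum_range_succ]
      linarith [sum_nonneg fun k (_ : k ∈ range n) => sq_nonneg (x (k + 1))]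
  have hq : |1 - b| ≤ 1 := abs_le.mpr ⟨by linarith, by linarith⟩
  have energy_zero : recurrenceEnergy (2 - a - b) (1 - b) x 0 = x 1 ^ 2 := by
    simp [recurrenceEnergy, hx0]
  calc (a + b) / 2 * x n ^ 2 = b / 2 * x n ^ 2 + a / 2 * x n ^ 2 := by ring
    _ ≤ b / 2 * x n ^ 2 + a / 2 * ∑ k ∈ range n, x (k + 1) ^ 2 := by gcongr
    _ ≤ ∑ k ∈ range n, recurrenceEnergy (2 - a - b) (1 - b) x k := telescope n
    _ ≤ n * x 1 ^ 2 := by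
      simpa only [energy_zero, abs_sq] using sum_recurrenceEnergy_le hx hq n

theorem stmt_10_general (α β h c : ℝ) (hh : 0 < h) (hα0 : 0 ≤ α)
    (hβ0 : 0 ≤ β) (hβ : β ≤ 2 / h - α) (hαβ : 0 < α + β)
    (η : ℕ → ℝ) (hη0 : η 0 = 0) (hη1 : η 1 = c)
    (hrec : ∀ n : ℕ, 1 ≤ n →
      η (n + 1) = (1 - α * h) * η n + (1 - β * h) * (η n - η (n - 1))) :
    ∀ n : ℕ, 1 ≤ n → (η n) ^ 2 ≤ 8 * c ^ 2 * (n : ℝ) / ((α + β) * h) := by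
  intro n _
  have hab : α * h + β * h ≤ 2 := by
    have := mul_le_mul_of_nonneg_right hβ hh.le
    rw [sub_mul, div_mul_cancel₀ _ hh.ne'] at this
    linarith
  have hrec_two_step : ∀ n, η (n + 2) = (2 - α * h - β * h) * η (n + 1) - (1 - β * h) * η n := by
    intro n
    rw [hrec (n + 1) n.succ_pos, Nat.add_sub_cancel]
    ring
  have hbound := mul_sq_le_of_heavyBall (mul_nonneg hα0 hh.le) (mul_nonneg hβ0 hh.le) hab
    hη0 hrec_two_step n
  rw [hη1] at hbound
  rw [le_div_iff₀ (mul_pos hαβ hh)]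
  have : 0 ≤ (n : ℝ) * c ^ 2 := by positivity
  linarith

/-- Second bound of Theorem 2: for 0 ≤ α ≤ 1/h, 0 ≤ β ≤ 2/h - α and α + β > 0,
η_n² ≤ 8c²n/((α+β)h). -/
theorem stmt_10 (α β h c : ℝ) (hh : 0 < h) (hα0 : 0 ≤ α) (hα : α ≤ 1 / h)
    (hβ0 : 0 ≤ β) (hβ : β ≤ 2 / h - α) (hαβ : 0 < α + β)
    (η : ℕ → ℝ) (hη0 : η 0 = 0) (hη1 : η 1 = c)
    (hrec : ∀ n : ℕ, 1 ≤ n →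
      η (n + 1) = (1 - α * h) * η n + (1 - β * h) * (η n - η (n - 1))) :
    ∀ n : ℕ, 1 ≤ n → (η n) ^ 2 ≤ 8 * c ^ 2 * (n : ℝ) / ((α + β) * h) :=
  stmt_10_general α β h c hh hα0 hβ0 hβ hαβ η hη0 hη1 hrec
end

section
/- Fix real numbers α, β, h with h > 0, 0 ≤ α ≤ 1/h, 0 ≤ β ≤ 2/h − α, and α + β > 0. Let c ∈ ℝ and let (η_n)_{n≥0} satisfy η_0 = 0, η_1 = c, η_{n+1} = (1 − αh)η_n + (1 − βh)(η_n − η_{n−1}) for n ≥ 1. Then for all n ≥ 1, η_n² ≤ 16c²/((α+β)²h²). -/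
/-!
With `s = (α + β) h` the recurrence reads `η (n + 2) = (2 - s) η (n + 1) - (1 - β h) η n`.
If `l`, `m` are the complex roots of its characteristic polynomial, then
`η n = c ∑_{i < n} l ^ i m ^ (n - 1 - i)`, and the hypotheses on `α`, `β` imply the Jury
conditions placing `l`, `m` in the closed unit disc. Multiplying the sum by `l - m` gives
`|η n| ‖l - m‖ ≤ 2 |c|`; bounding it termwise by `n ρ ^ (n - 1)` with `ρ = max ‖l‖ ‖m‖` gives
`|η n| (1 - ρ) ≤ |c|`. As `‖l + m‖ = 2 - s`, either `‖l - m‖ ≥ s / 2` or `ρ ≤ 1 - s / 4`, and in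
both cases `|η n| s ≤ 4 |c|`.
-/

open Finset

lemma natCast_mul_pow_pred_mul_one_sub_le_one {ρ : ℝ} (h0 : 0 ≤ ρ) (h1 : ρ ≤ 1) (n : ℕ) :
    n * ρ ^ (n - 1) * (1 - ρ) ≤ 1 := by
  have hsum : (n : ℝ) * ρ ^ (n - 1) ≤ ∑ k ∈ range n, ρ ^ k :=
    calc (n : ℝ) * ρ ^ (n - 1) = ∑ _k ∈ range n, ρ ^ (n - 1) := by simp
      _ ≤ ∑ k ∈ range n, ρ ^ k :=
        sum_le_sum fun k hk => pow_le_pow_of_le_one h0 h1 (by grind)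
  calc n * ρ ^ (n - 1) * (1 - ρ) ≤ (∑ k ∈ range n, ρ ^ k) * (1 - ρ) := by gcongr
    _ = 1 - ρ ^ n := by linear_combination -geom_sum_mul ρ n
    _ ≤ 1 := by linarith [pow_nonneg h0 n]

section Recurrence

variable {R : Type*} [CommRing R]

lemma geom_sum₂_add_two (l m : R) (n : ℕ) :
    ∑ i ∈ range (n + 2), l ^ i * m ^ (n + 2 - 1 - i) =
      (l + m) * ∑ i ∈ range (n + 1), l ^ i * m ^ (n + 1 - 1 - i) -
        l * m * ∑ i ∈ range n, l ^ i * m ^ (n - 1 - i) := by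
  show ∑ i ∈ range (n + 1 + 1), l ^ i * m ^ (n + 1 - i) =
    (l + m) * ∑ i ∈ range (n + 1), l ^ i * m ^ (n - i) -
      l * m * ∑ i ∈ range n, l ^ i * m ^ (n - 1 - i)
  rw [geom_sum₂_succ_eq, Nat.add_sub_cancel, geom_sum₂_succ_eq]
  ring

lemma eq_mul_geom_sum₂_of_recurrence {x : ℕ → R} {l m c : R} (h0 : x 0 = 0) (h1 : x 1 = c)
    (hrec : ∀ n, x (n + 2) = (l + m) * x (n + 1) - l * m * x n) (n : ℕ) :
    x n = c * ∑ i ∈ range n, l ^ i * m ^ (n - 1 - i) := by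
  induction n using Nat.twoStepInduction with
  | zero => simp [h0]
  | one => simp [h1]
  | more n ih ih' => rw [hrec, ih, ih', geom_sum₂_add_two]; ring

end Recurrence

section Norms

variable {𝕜 : Type*} [NormedField 𝕜] {l m : 𝕜}

lemma norm_geom_sum₂_le {ρ : ℝ} (hl : ‖l‖ ≤ ρ) (hm : ‖m‖ ≤ ρ) (n : ℕ) :
    ‖∑ i ∈ range n, l ^ i * m ^ (n - 1 - i)‖ ≤ n * ρ ^ (n - 1) := by
  have hρ : 0 ≤ ρ := (norm_nonneg l).trans hl
  calc ‖∑ i ∈ range n, l ^ i * m ^ (n - 1 - i)‖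
      ≤ ∑ i ∈ range n, ‖l‖ ^ i * ‖m‖ ^ (n - 1 - i) := by
        simpa only [norm_mul, norm_pow] using norm_sum_le (range n) fun i => l ^ i * m ^ (n - 1 - i)
    _ ≤ ∑ i ∈ range n, ρ ^ i * ρ ^ (n - 1 - i) := by gcongr
    _ = ∑ _i ∈ range n, ρ ^ (n - 1) :=
        sum_congr rfl fun i hi => by rw [← pow_add]; congr 1; grind
    _ = n * ρ ^ (n - 1) := by simp

lemma norm_geom_sum₂_mul_one_sub_le_one {ρ : ℝ} (hl : ‖l‖ ≤ ρ) (hm : ‖m‖ ≤ ρ) (hρ : ρ ≤ 1)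
    (n : ℕ) : ‖∑ i ∈ range n, l ^ i * m ^ (n - 1 - i)‖ * (1 - ρ) ≤ 1 :=
  calc _ ≤ n * ρ ^ (n - 1) * (1 - ρ) :=
        mul_le_mul_of_nonneg_right (norm_geom_sum₂_le hl hm n) (by linarith)
    _ ≤ 1 := natCast_mul_pow_pred_mul_one_sub_le_one ((norm_nonneg l).trans hl) hρ n

lemma norm_geom_sum₂_mul_norm_sub_le_two (hl : ‖l‖ ≤ 1) (hm : ‖m‖ ≤ 1) (n : ℕ) :
    ‖∑ i ∈ range n, l ^ i * m ^ (n - 1 - i)‖ * ‖l - m‖ ≤ 2 := by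
  rw [← norm_mul, geom_sum₂_mul]
  calc ‖l ^ n - m ^ n‖ ≤ ‖l‖ ^ n + ‖m‖ ^ n := by
        simpa only [norm_pow] using norm_sub_le (l ^ n) (m ^ n)
    _ ≤ 1 + 1 := by gcongr <;> exact pow_le_one₀ (norm_nonneg _) ‹_›
    _ = 2 := one_add_one_eq_two

end Norms

-- Either the roots are `s / 2` apart, or `‖l + m‖ ≤ 2 - s` pushes both of them a distance
-- `s / 4` inside the unit disc.
lemma norm_geom_sum₂_mul_le_four {𝕜 : Type*} [RCLike 𝕜] {l m : 𝕜} {s : ℝ}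
    (hl : ‖l‖ ≤ 1) (hm : ‖m‖ ≤ 1) (hsum : ‖l + m‖ ≤ 2 - s) (n : ℕ) :
    ‖∑ i ∈ range n, l ^ i * m ^ (n - 1 - i)‖ * s ≤ 4 := by
  set G := ‖∑ i ∈ range n, l ^ i * m ^ (n - 1 - i)‖
  have hG : 0 ≤ G := norm_nonneg _
  rcases le_or_gt (s / 2) ‖l - m‖ with hsep | hclose
  · calc G * s ≤ 2 * (G * ‖l - m‖) := by nlinarith
      _ ≤ 4 := by linarith [norm_geom_sum₂_mul_norm_sub_le_two hl hm n]
  · have h2l : 2 * ‖l‖ ≤ ‖l + m‖ + ‖l - m‖ :=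
      calc 2 * ‖l‖ = ‖(l + m) + (l - m)‖ := by
            rw [← RCLike.norm_two (K := 𝕜), ← norm_mul]; ring_nf
        _ ≤ ‖l + m‖ + ‖l - m‖ := norm_add_le _ _
    have h2m : 2 * ‖m‖ ≤ ‖l + m‖ + ‖l - m‖ :=
      calc 2 * ‖m‖ = ‖(l + m) - (l - m)‖ := by
            rw [← RCLike.norm_two (K := 𝕜), ← norm_mul]; ring_nf
        _ ≤ ‖l + m‖ + ‖l - m‖ := norm_sub_le _ _
    have hs : 0 ≤ s := by linarith [norm_nonneg (l - m)]
    have := norm_geom_sum₂_mul_one_sub_le_one (l := l) (m := m) (ρ := 1 - s / 4) (by linarith)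
      (by linarith) (by linarith) n
    linarith

-- The Jury (Schur–Cohn) stability criterion for `X ^ 2 - p X + b`.
lemma Complex.norm_le_one_of_add_eq_of_mul_eq {l m : ℂ} {p b : ℝ} (hsum : l + m = p)
    (hprod : l * m = b) (hb : b ≤ 1) (hp : |p| ≤ 1 + b) : ‖l‖ ≤ 1 := by
  have hre := congrArg re hsum
  have him := congrArg im hsum
  have hre' := congrArg re hprod
  have him' := congrArg im hprod
  simp only [add_re, add_im, mul_re, mul_im, ofReal_re, ofReal_im] at hre him hre' him'
  rw [abs_le] at hp
  rw [← sq_le_one_iff₀ (norm_nonneg l), Complex.sq_norm, normSq_apply]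
  by_cases hl : l.im = 0
  · -- real roots: the polynomial is nonnegative at `1` and `-1`, and `|l + m| ≤ 2`
    have hm : m.im = 0 := by linarith
    rw [hm, hl] at hre'
    have hat_one : 0 ≤ (1 - l.re) * (1 - m.re) := by nlinarith
    have hat_neg_one : 0 ≤ (1 + l.re) * (1 + m.re) := by nlinarith
    have hle : l.re ≤ 1 := by nlinarith
    have hge : -1 ≤ l.re := by nlinarith
    rw [hl]
    nlinarith
  · -- non-real roots are conjugate, so `‖l‖ ^ 2 = l * m = b`
    have hm : m.im = -l.im := by linarith
    have hre_eq : m.re = l.re := by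
      rw [hm] at him'
      exact mul_left_cancel₀ hl (by linarith : l.im * m.re = l.im * l.re)
    rw [hm, hre_eq] at hre'
    nlinarith

lemma Complex.exists_add_eq_and_mul_eq (p b : ℂ) : ∃ l m : ℂ, l + m = p ∧ l * m = b := by
  obtain ⟨d, hd⟩ := IsAlgClosed.exists_pow_nat_eq (p ^ 2 - 4 * b) two_pos
  exact ⟨(p + d) / 2, (p - d) / 2, by ring, by linear_combination (-1 / 4 : ℂ) * hd⟩

theorem stmt_11_general (α β h c : ℝ) (hh : 0 < h) (hα0 : 0 ≤ α)
    (hβ0 : 0 ≤ β) (hβ : β ≤ 2 / h - α) (hαβ : 0 < α + β)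
    (η : ℕ → ℝ) (hη0 : η 0 = 0) (hη1 : η 1 = c)
    (hrec : ∀ n : ℕ, 1 ≤ n →
      η (n + 1) = (1 - α * h) * η n + (1 - β * h) * (η n - η (n - 1))) :
    ∀ n : ℕ, 1 ≤ n → (η n) ^ 2 ≤ 16 * c ^ 2 / ((α + β) ^ 2 * h ^ 2) := by
  intro n _
  have hs : (α + β) * h ≤ 2 := by rw [le_sub_iff_add_le, le_div_iff₀ hh] at hβ; linarith
  have hαh : 0 ≤ α * h := by positivity
  have hβh : 0 ≤ β * h := by positivity
  obtain ⟨l, m, hsum, hprod⟩ :=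
    Complex.exists_add_eq_and_mul_eq (2 - (α + β) * h : ℝ) (1 - β * h : ℝ)
  have hb : 1 - β * h ≤ 1 := by linarith
  have hp : |2 - (α + β) * h| ≤ 1 + (1 - β * h) := abs_le.mpr ⟨by nlinarith, by nlinarith⟩
  have hl := Complex.norm_le_one_of_add_eq_of_mul_eq hsum hprod hb hp
  have hm := Complex.norm_le_one_of_add_eq_of_mul_eq (add_comm l m ▸ hsum)
    (mul_comm l m ▸ hprod) hb hp
  have hη : ∀ k, (η k : ℂ) = c * ∑ i ∈ range k, l ^ i * m ^ (k - 1 - i) := by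
    refine eq_mul_geom_sum₂_of_recurrence (by simp [hη0]) (by simp [hη1]) fun k => ?_
    rw [hsum, hprod, hrec (k + 1) le_add_self]
    push_cast
    ring
  have hbound : |η n| * ((α + β) * h) ≤ 4 * |c| := by
    have hG := norm_geom_sum₂_mul_le_four hl hm
      (by rw [hsum, Complex.norm_real, Real.norm_of_nonneg (by linarith)]) n
    calc |η n| * ((α + β) * h)
        = |c| * (‖∑ i ∈ range n, l ^ i * m ^ (n - 1 - i)‖ * ((α + β) * h)) := by
          rw [← Real.norm_eq_abs, ← Complex.norm_real, hη n, norm_mul, Complex.norm_real,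
            Real.norm_eq_abs, mul_assoc]
      _ ≤ |c| * 4 := by gcongr
      _ = 4 * |c| := mul_comm _ _
  rw [le_div_iff₀ (by positivity)]
  calc η n ^ 2 * ((α + β) ^ 2 * h ^ 2) = (|η n| * ((α + β) * h)) ^ 2 := by
        rw [mul_pow, sq_abs]; ring
    _ ≤ (4 * |c|) ^ 2 := pow_le_pow_left₀ (by positivity) hbound 2
    _ = 16 * c ^ 2 := by rw [mul_pow, sq_abs]; norm_num

/-- Third bound of Theorem 2: for 0 ≤ α ≤ 1/h, 0 ≤ β ≤ 2/h - α and α + β > 0,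
η_n² ≤ 16c²/((α+β)²h²). -/
theorem stmt_11 (α β h c : ℝ) (hh : 0 < h) (hα0 : 0 ≤ α) (hα : α ≤ 1 / h)
    (hβ0 : 0 ≤ β) (hβ : β ≤ 2 / h - α) (hαβ : 0 < α + β)
    (η : ℕ → ℝ) (hη0 : η 0 = 0) (hη1 : η 1 = c)
    (hrec : ∀ n : ℕ, 1 ≤ n →
      η (n + 1) = (1 - α * h) * η n + (1 - β * h) * (η n - η (n - 1))) :
    ∀ n : ℕ, 1 ≤ n → (η n) ^ 2 ≤ 16 * c ^ 2 / ((α + β) ^ 2 * h ^ 2) :=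
  stmt_11_general α β h c hh hα0 hβ0 hβ hαβ η hη0 hη1 hrec
end

section
/- Let d ≥ 1, let H be a d×d real symmetric positive-definite matrix, let L > 0 satisfy ⟨v, Hv⟩ ≤ L‖v‖² for all v ∈ ℝ^d, let q ∈ ℝ^d, f(θ) = ½⟨θ, Hθ⟩ − ⟨q, θ⟩, and θ* = H⁻¹q its unique minimizer. Let α, β ∈ ℝ with 0 < α ≤ 1/L and 0 ≤ β ≤ 2/L − α, and let (θ_n)_{n≥0} be defined by θ_1 = θ_0 and, with η_n = n(θ_n − θ*), by η_{n+1} = (I − αH)η_n + (I − βH)(η_n − η_{n−1}) for n ≥ 1. Then for all n ≥ 1: f(θ_n) − f(θ*) ≤ min{ ‖θ_0 − θ*‖²/(α n²), 4‖θ_0 − θ*‖²/((α+β) n) }. -/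
open Matrix

/-!
In an orthonormal eigenbasis of `H` the recursion decouples: along an eigenvector with
eigenvalue `λ`, the coordinate of `η n` is `c * U n`, where `c` is the coordinate of `θ 0 - θ*`
and `U` is the Lucas sequence `U (n+2) = s U (n+1) - (1 - y) U n` with `x = αλ`, `y = βλ`,
`s = 2 - x - y`. As `f (θ n) - f θ* = ∑ λ c² (U n)² / (2 n²)`, it suffices that `x U_n² ≤ 2` and
`(x + y) U_n² ≤ 2n`.

Let `t ≤ 1` be the larger root of `X² - s X + (1 - y)`, or the common modulus of complex roots.
Then `|U (n+1)| ≤ t |U n| + t ^ n`, whence `(1 - t) |U n| ≤ 1 - t ^ n` and `|U n| ≤ n`. Split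
`x + y = 2 (1 - t) + (2t - s)` and `x = (1 - t)² + (2t - s)` (complex roots) or
`x = (1 - t) ((1 - t) + (2t - s))` (real roots). The `2t - s` parts are controlled by the
closed form `(t - r) U n = t ^ n - r ^ n` for real roots `t, r`, and by Cassini's identity, a
positive definite quadratic form in `(U (n+1), U n)`, for complex roots.
-/
noncomputable def lucasU (s p : ℝ) : ℕ → ℝ
  | 0 => 0
  | 1 => 1
  | n + 2 => s * lucasU s p (n + 1) - p * lucasU s p n

section Growth

variable {b : ℕ → ℝ} {t : ℝ}

lemma one_sub_mul_abs_le_of_abs_succ_le (hb0 : b 0 = 0) (ht0 : 0 ≤ t) (ht1 : t ≤ 1)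
    (hstep : ∀ n, |b (n + 1)| ≤ t * |b n| + t ^ n) (n : ℕ) :
    (1 - t) * |b n| ≤ 1 - t ^ n := by
  induction n with
  | zero => simp [hb0]
  | succ n ih =>
    have htn : t ^ n ≤ 1 := pow_le_one₀ ht0 ht1
    have := mul_le_mul_of_nonneg_left (hstep n) (sub_nonneg.2 ht1)
    rw [pow_succ]
    nlinarith [mul_le_mul_of_nonneg_left ih ht0, mul_nonneg (sub_nonneg.2 ht1) (sub_nonneg.2 htn)]

lemma abs_le_of_abs_succ_le (hb0 : b 0 = 0) (ht0 : 0 ≤ t) (ht1 : t ≤ 1)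
    (hstep : ∀ n, |b (n + 1)| ≤ t * |b n| + t ^ n) (n : ℕ) : |b n| ≤ n := by
  induction n with
  | zero => simp [hb0]
  | succ n ih =>
    push_cast
    nlinarith [hstep n, pow_le_one₀ (n := n) ht0 ht1, abs_nonneg (b n)]

end Growth

namespace lucasU

variable {s p : ℝ}

@[simp] lemma zero : lucasU s p 0 = 0 := rfl

@[simp] lemma one : lucasU s p 1 = 1 := rfl

lemma add_two (n : ℕ) : lucasU s p (n + 2) = s * lucasU s p (n + 1) - p * lucasU s p n := rfl

lemma eq_mul_of_recurrence {a : ℕ → ℝ} (h0 : a 0 = 0)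
    (hrec : ∀ n, a (n + 2) = s * a (n + 1) - p * a n) (n : ℕ) : a n = a 1 * lucasU s p n := by
  induction n using Nat.twoStepInduction with
  | zero => simp [h0]
  | one => simp
  | more n ih ih' => rw [hrec, add_two, ih, ih']; ring

lemma cassini (n : ℕ) :
    lucasU s p (n + 1) ^ 2 - lucasU s p n * lucasU s p (n + 2) = p ^ n := by
  induction n with
  | zero => simp [add_two]
  | succ n ih => rw [add_two, add_two, pow_succ p, ← ih, add_two]; ring

lemma succ_eq_of_roots {t r : ℝ} (hs : t + r = s) (hp : t * r = p) (n : ℕ) :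
    lucasU s p (n + 1) = t * lucasU s p n + r ^ n := by
  subst hs hp
  induction n with
  | zero => simp
  | succ n ih => rw [add_two, pow_succ, ih]; ring

lemma sub_mul_eq_of_roots {t r : ℝ} (hs : t + r = s) (hp : t * r = p) (n : ℕ) :
    (t - r) * lucasU s p n = t ^ n - r ^ n := by
  have h₁ := succ_eq_of_roots hs hp n
  have h₂ := succ_eq_of_roots (by rw [add_comm, hs]) (by rw [mul_comm, hp]) n
  linarith

lemma sq_bounds_of_roots {t r : ℝ} (hs : t + r = s) (hp : t * r = p) (hrt : |r| ≤ t)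
    (ht : t ≤ 1) (n : ℕ) :
    (1 - s + p) * lucasU s p n ^ 2 ≤ 1 ∧ (2 - s) * lucasU s p n ^ 2 ≤ 2 * n := by
  have ht0 : 0 ≤ t := (abs_nonneg r).trans hrt
  have hrt' : r ≤ t := le_of_abs_le hrt
  have hstep (k : ℕ) : |lucasU s p (k + 1)| ≤ t * |lucasU s p k| + t ^ k := by
    rw [succ_eq_of_roots hs hp, ← abs_of_nonneg ht0, ← abs_mul, abs_of_nonneg ht0]
    refine (abs_add_le _ _).trans (add_le_add_right ?_ _)
    rw [abs_pow]
    exact pow_le_pow_left₀ (abs_nonneg r) hrt k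
  have hA := one_sub_mul_abs_le_of_abs_succ_le zero ht0 ht hstep n
  have hU := abs_le_of_abs_succ_le zero ht0 ht hstep n
  have hB : (t - r) * |lucasU s p n| ≤ 2 * t ^ n := by
    rw [← abs_of_nonneg (sub_nonneg.2 hrt'), ← abs_mul, sub_mul_eq_of_roots hs hp]
    refine (abs_sub _ _).trans ?_
    rw [abs_pow, abs_pow, abs_of_nonneg ht0]
    linarith [pow_le_pow_left₀ (abs_nonneg r) hrt n]
  have hA0 : 0 ≤ (1 - t) * |lucasU s p n| := mul_nonneg (sub_nonneg.2 ht) (abs_nonneg _)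
  have hB0 : 0 ≤ (t - r) * |lucasU s p n| := mul_nonneg (sub_nonneg.2 hrt') (abs_nonneg _)
  have hx : 1 - s + p = (1 - t) * (1 - r) := by rw [← hs, ← hp]; ring
  have hxy : 2 - s = 2 * (1 - t) + (t - r) := by rw [← hs]; ring
  rw [← sq_abs, hx, hxy]
  constructor
  · calc (1 - t) * (1 - r) * |lucasU s p n| ^ 2
        = ((1 - t) * |lucasU s p n|) * ((1 - t) * |lucasU s p n| + (t - r) * |lucasU s p n|) := by
          ring
      _ ≤ (1 - t ^ n) * (1 - t ^ n + 2 * t ^ n) := by gcongr; linarith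
      _ ≤ 1 := by nlinarith [pow_nonneg ht0 n]
  · calc (2 * (1 - t) + (t - r)) * |lucasU s p n| ^ 2
        = (2 * ((1 - t) * |lucasU s p n|) + (t - r) * |lucasU s p n|) * |lucasU s p n| := by ring
      _ ≤ (2 * (1 - t ^ n) + 2 * t ^ n) * n := by gcongr; linarith
      _ = 2 * n := by ring

lemma sq_bounds_of_sq_lt (hs : 0 ≤ s) (hsp : s ^ 2 < 4 * p) (hp : p ≤ 1) (n : ℕ) :
    (1 - s + p) * lucasU s p n ^ 2 ≤ 2 ∧ (2 - s) * lucasU s p n ^ 2 ≤ 2 * n := by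
  obtain ⟨t, ht0, rfl⟩ : ∃ t, 0 < t ∧ t ^ 2 = p :=
    ⟨√p, Real.sqrt_pos.2 (by nlinarith), Real.sq_sqrt (by nlinarith)⟩
  have ht1 : t ≤ 1 := by nlinarith
  have hst : s < 2 * t := by nlinarith
  have hpow (k : ℕ) : (t ^ 2) ^ k = (t ^ k) ^ 2 := by ring
  -- Cassini reads `(U (k+1) - s U k / 2)² + (t² - s² / 4) (U k)² = t ^ (2k)`, a sum of two squares.
  have hform (k : ℕ) := cassini (s := s) (p := t ^ 2) k
  simp only [add_two] at hform
  have hstep (k : ℕ) : |lucasU s (t ^ 2) (k + 1)| ≤ t * |lucasU s (t ^ 2) k| + t ^ k := by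
    have hdev : |lucasU s (t ^ 2) (k + 1) - s / 2 * lucasU s (t ^ 2) k| ≤ t ^ k :=
      abs_le_of_sq_le_sq (by nlinarith [hform k, hpow k, sq_nonneg (lucasU s (t ^ 2) k)])
        (pow_nonneg ht0.le k)
    have hhalf : |s / 2 * lucasU s (t ^ 2) k| ≤ t * |lucasU s (t ^ 2) k| := by
      rw [abs_mul, abs_of_nonneg (by positivity : 0 ≤ s / 2)]
      gcongr; linarith
    linarith [abs_sub_abs_le_abs_sub (lucasU s (t ^ 2) (k + 1)) (s / 2 * lucasU s (t ^ 2) k)]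
  have hA := one_sub_mul_abs_le_of_abs_succ_le zero ht0.le ht1 hstep n
  have hU := abs_le_of_abs_succ_le zero ht0.le ht1 hstep n
  obtain _ | m := n
  · simp
  have hu : t ^ (m + 1) ≤ t := pow_le_of_le_one ht0.le ht1 (by omega)
  have hu0 := pow_nonneg ht0.le (m + 1)
  have hD : (2 * t - s) * lucasU s (t ^ 2) (m + 1) ^ 2 ≤ 2 * t ^ (m + 1) := by
    have hX0 : 0 ≤ (2 * t - s) * lucasU s (t ^ 2) (m + 1) ^ 2 :=
      mul_nonneg (by linarith) (sq_nonneg _)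
    have henergy : (2 * t + s) * ((2 * t - s) * lucasU s (t ^ 2) (m + 1) ^ 2)
        ≤ 4 * (t ^ (m + 1)) ^ 2 := by
      nlinarith [hform (m + 1), hpow (m + 1),
        sq_nonneg (lucasU s (t ^ 2) (m + 2) - s / 2 * lucasU s (t ^ 2) (m + 1))]
    refine le_of_mul_le_mul_left ?_ (by positivity : 0 < 2 * t)
    nlinarith [mul_nonneg hs hX0, mul_le_mul_of_nonneg_left hu hu0]
  have hu1 := pow_le_one₀ (n := m + 1) ht0.le ht1
  rw [← sq_abs (lucasU s (t ^ 2) (m + 1))] at hD ⊢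
  constructor
  · calc (1 - s + t ^ 2) * |lucasU s (t ^ 2) (m + 1)| ^ 2
        = ((1 - t) * |lucasU s (t ^ 2) (m + 1)|) ^ 2
          + (2 * t - s) * |lucasU s (t ^ 2) (m + 1)| ^ 2 := by ring
      _ ≤ (1 - t ^ (m + 1)) ^ 2 + 2 * t ^ (m + 1) := by gcongr
      _ ≤ 2 := by nlinarith
  · calc (2 - s) * |lucasU s (t ^ 2) (m + 1)| ^ 2
        = 2 * ((1 - t) * |lucasU s (t ^ 2) (m + 1)|) * |lucasU s (t ^ 2) (m + 1)|
          + (2 * t - s) * |lucasU s (t ^ 2) (m + 1)| ^ 2 := by ring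
      _ ≤ 2 * (1 - t ^ (m + 1)) * (m + 1 : ℕ) + 2 * t ^ (m + 1) := by gcongr
      _ ≤ 2 * (m + 1 : ℕ) := by
          push_cast
          nlinarith [(m.cast_nonneg : (0 : ℝ) ≤ m)]

theorem sq_bounds {x y : ℝ} (hx : 0 ≤ x) (hy : 0 ≤ y) (hxy : x + y ≤ 2) (n : ℕ) :
    x * lucasU (2 - x - y) (1 - y) n ^ 2 ≤ 2 ∧
      (x + y) * lucasU (2 - x - y) (1 - y) n ^ 2 ≤ 2 * n := by
  set s := 2 - x - y
  set p := 1 - y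
  rw [show x + y = 2 - s by linarith, show x = 1 - s + p by linarith]
  by_cases hdisc : s ^ 2 < 4 * p
  · exact sq_bounds_of_sq_lt (by linarith) hdisc (by linarith) n
  set δ := √(s ^ 2 - 4 * p)
  have hδ0 : 0 ≤ δ := Real.sqrt_nonneg _
  have hδ2 : δ ^ 2 = s ^ 2 - 4 * p := Real.sq_sqrt (by linarith)
  refine (sq_bounds_of_roots (t := (s + δ) / 2) (r := (s - δ) / 2)
    (by ring) (by linear_combination -hδ2 / 4) (abs_le.2 ⟨by linarith, by linarith⟩)
    (by nlinarith) n).imp_left (fun h => h.trans one_le_two)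

end lucasU

lemma Matrix.IsHermitian.transpose_eq {m : Type*} {H : Matrix m m ℝ} (hH : H.IsHermitian) :
    Hᵀ = H := by
  rw [← conjTranspose_eq_transpose_of_trivial]; exact hH

section Spectral

variable {m : Type*} [Fintype m] {H : Matrix m m ℝ}

lemma OrthonormalBasis.sum_dotProduct_mul_dotProduct {ι : Type*} [Fintype ι]
    (b : OrthonormalBasis ι ℝ (EuclideanSpace ℝ m)) (v w : m → ℝ) :
    ∑ i, (v ⬝ᵥ ⇑(b i)) * (w ⬝ᵥ ⇑(b i)) = v ⬝ᵥ w := by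
  have h := b.sum_inner_mul_inner (WithLp.toLp 2 v) (WithLp.toLp 2 w)
  simp only [EuclideanSpace.inner_eq_star_dotProduct, star_trivial] at h
  simpa [dotProduct_comm] using h

lemma Matrix.smul_dotProduct_mulVec_smul (v : m → ℝ) (c : ℝ) :
    c • v ⬝ᵥ H *ᵥ (c • v) = c ^ 2 * (v ⬝ᵥ H *ᵥ v) := by
  rw [mulVec_smul, smul_dotProduct, dotProduct_smul, smul_eq_mul, smul_eq_mul]; ring

namespace Matrix.IsHermitian

lemma dotProduct_mulVec_comm (hH : H.IsHermitian) (v w : m → ℝ) :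
    v ⬝ᵥ H *ᵥ w = H *ᵥ v ⬝ᵥ w := by
  rw [dotProduct_mulVec, ← mulVec_transpose, hH.transpose_eq]

lemma quadratic_sub_eq (hH : H.IsHermitian) {q θstar : m → ℝ} (hq : H *ᵥ θstar = q)
    (θ : m → ℝ) :
    (1 / 2 * (θ ⬝ᵥ H *ᵥ θ) - q ⬝ᵥ θ) - (1 / 2 * (θstar ⬝ᵥ H *ᵥ θstar) - q ⬝ᵥ θstar)
      = 1 / 2 * ((θ - θstar) ⬝ᵥ H *ᵥ (θ - θstar)) := by
  subst hq
  rw [mulVec_sub, dotProduct_sub, sub_dotProduct, sub_dotProduct,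
    hH.dotProduct_mulVec_comm θstar θ, hH.dotProduct_mulVec_comm θstar θstar,
    dotProduct_comm θ (H *ᵥ θstar)]
  ring

variable [DecidableEq m] (hH : H.IsHermitian)

lemma mulVec_dotProduct_eigenvectorBasis (v : m → ℝ) (i : m) :
    H *ᵥ v ⬝ᵥ ⇑(hH.eigenvectorBasis i) = hH.eigenvalues i * (v ⬝ᵥ ⇑(hH.eigenvectorBasis i)) := by
  rw [← hH.dotProduct_mulVec_comm, mulVec_eigenvectorBasis, dotProduct_smul, smul_eq_mul]

lemma dotProduct_mulVec_eq_sum (v : m → ℝ) :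
    v ⬝ᵥ H *ᵥ v = ∑ i, hH.eigenvalues i * (v ⬝ᵥ ⇑(hH.eigenvectorBasis i)) ^ 2 := by
  rw [← hH.eigenvectorBasis.sum_dotProduct_mul_dotProduct]
  simp only [mulVec_dotProduct_eigenvectorBasis]
  congr! 1 with i; ring

lemma quadratic_sub_eq_sum {q θstar θ η : m → ℝ} {N : ℝ} (hN : N ≠ 0) (hq : H *ᵥ θstar = q)
    (hη : η = N • (θ - θstar)) :
    (1 / 2 * (θ ⬝ᵥ H *ᵥ θ) - q ⬝ᵥ θ) - (1 / 2 * (θstar ⬝ᵥ H *ᵥ θstar) - q ⬝ᵥ θstar)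
      = (∑ i, hH.eigenvalues i * (η ⬝ᵥ ⇑(hH.eigenvectorBasis i)) ^ 2) / (2 * N ^ 2) := by
  have hθ : θ - θstar = N⁻¹ • η := by rw [hη, smul_smul, inv_mul_cancel₀ hN, one_smul]
  rw [hH.quadratic_sub_eq hq, hθ, smul_dotProduct_mulVec_smul, hH.dotProduct_mulVec_eq_sum]
  field_simp

lemma eigenvalues_le {L : ℝ} (hL : ∀ v, v ⬝ᵥ H *ᵥ v ≤ L * (v ⬝ᵥ v)) (i : m) :
    hH.eigenvalues i ≤ L := by
  have hunit : ⇑(hH.eigenvectorBasis i) ⬝ᵥ ⇑(hH.eigenvectorBasis i) = 1 := by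
    have h := real_inner_self_eq_norm_sq (hH.eigenvectorBasis i)
    rw [hH.eigenvectorBasis.orthonormal.1 i, EuclideanSpace.inner_eq_star_dotProduct] at h
    simpa using h
  simpa [mulVec_eigenvectorBasis, hunit] using hL (hH.eigenvectorBasis i)

lemma dotProduct_eigenvectorBasis_eq_mul_lucasU {α β : ℝ} {η : ℕ → m → ℝ} (h0 : η 0 = 0)
    (hstep : ∀ k, η (k + 2) = (η (k + 1) - α • H *ᵥ η (k + 1))
      + ((η (k + 1) - η k) - β • H *ᵥ (η (k + 1) - η k))) (i : m) (k : ℕ) :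
    η k ⬝ᵥ ⇑(hH.eigenvectorBasis i) = (η 1 ⬝ᵥ ⇑(hH.eigenvectorBasis i)) *
      lucasU (2 - α * hH.eigenvalues i - β * hH.eigenvalues i) (1 - β * hH.eigenvalues i) k := by
  refine lucasU.eq_mul_of_recurrence (a := fun k => η k ⬝ᵥ ⇑(hH.eigenvectorBasis i))
    (by simp [h0]) (fun k => ?_) k
  simp only [hstep, add_dotProduct, sub_dotProduct, smul_dotProduct, smul_eq_mul,
    mulVec_dotProduct_eigenvectorBasis]
  ring

end Matrix.IsHermitian

end Spectral

lemma mul_sum_mul_mul_sq_le {ι : Type*} [Fintype ι] {w c g : ι → ℝ} {κ K : ℝ}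
    (h : ∀ i, κ * w i * g i ^ 2 ≤ K) :
    κ * ∑ i, w i * (c i * g i) ^ 2 ≤ K * ∑ i, c i ^ 2 := by
  rw [Finset.mul_sum, Finset.mul_sum]
  refine Finset.sum_le_sum fun i _ => ?_
  linarith [mul_le_mul_of_nonneg_right (h i) (sq_nonneg (c i))]

theorem stmt_12_general (d : ℕ)
    (H : Matrix (Fin d) (Fin d) ℝ) (hHpd : H.PosDef)
    (L : ℝ) (hL0 : 0 < L)
    (hL : ∀ v : Fin d → ℝ, v ⬝ᵥ H.mulVec v ≤ L * (v ⬝ᵥ v))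
    (q θstar : Fin d → ℝ) (hθstar : H.mulVec θstar = q)
    (α β : ℝ) (hα0 : 0 < α) (hβ0 : 0 ≤ β) (hβ : β ≤ 2 / L - α)
    (θ : ℕ → Fin d → ℝ) (hθ1 : θ 1 = θ 0)
    (η : ℕ → Fin d → ℝ) (hη : ∀ n, η n = (n : ℝ) • (θ n - θstar))
    (hrec : ∀ n : ℕ, 1 ≤ n →
      η (n + 1) = (η n - α • H.mulVec (η n))
        + ((η n - η (n - 1)) - β • H.mulVec (η n - η (n - 1)))) :
    ∀ n : ℕ, 1 ≤ n →
      ((1 : ℝ) / 2 * (θ n ⬝ᵥ H.mulVec (θ n)) - q ⬝ᵥ θ n)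
          - ((1 : ℝ) / 2 * (θstar ⬝ᵥ H.mulVec θstar) - q ⬝ᵥ θstar)
        ≤ min (((θ 0 - θstar) ⬝ᵥ (θ 0 - θstar)) / (α * (n : ℝ) ^ 2))
            (4 * ((θ 0 - θstar) ⬝ᵥ (θ 0 - θstar)) / ((α + β) * (n : ℝ))) := by
  intro n hn
  have hH := hHpd.isHermitian
  have hn0 : (0 : ℝ) < n := by exact_mod_cast hn
  set c := fun i => (θ 0 - θstar) ⬝ᵥ ⇑(hH.eigenvectorBasis i)
  set g := fun i =>
    lucasU (2 - α * hH.eigenvalues i - β * hH.eigenvalues i) (1 - β * hH.eigenvalues i) n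
  have hcoeff (i : Fin d) : η n ⬝ᵥ ⇑(hH.eigenvectorBasis i) = c i * g i := by
    rw [hH.dotProduct_eigenvectorBasis_eq_mul_lucasU (η := η) (by simp [hη])
      (fun k => by simpa using hrec (k + 1) (by omega)), hη 1, hθ1, Nat.cast_one, one_smul]
  have hnorm : (θ 0 - θstar) ⬝ᵥ (θ 0 - θstar) = ∑ i, c i ^ 2 := by
    simp only [sq, c, hH.eigenvectorBasis.sum_dotProduct_mul_dotProduct]
  have hαβ : (α + β) * L ≤ 2 := (le_div_iff₀ hL0).1 (by linarith)
  have hbound (i : Fin d) :=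
    have hev0 := (hHpd.eigenvalues_pos i).le
    lucasU.sq_bounds (x := α * hH.eigenvalues i) (y := β * hH.eigenvalues i) (by positivity)
      (by positivity) (by nlinarith [hH.eigenvalues_le hL i]) n
  have hA := mul_sum_mul_mul_sq_le (c := c) (g := g) fun i => (hbound i).1
  have hB := mul_sum_mul_mul_sq_le (c := c) (g := g) (κ := α + β)
    fun i => by rw [add_mul]; exact (hbound i).2
  have hV : 0 ≤ ∑ i, c i ^ 2 := by positivity
  rw [hH.quadratic_sub_eq_sum hn0.ne' hθstar (hη n), hnorm]
  simp only [hcoeff]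
  refine le_min ?_ ?_ <;> rw [div_le_div_iff₀ (by positivity) (by positivity)] <;> nlinarith

/-- Corollary 1 (noiseless case): for 0 < α ≤ 1/L and 0 ≤ β ≤ 2/L - α, the second-order
algorithm satisfies f(θ_n) - f(θ*) ≤ min{‖θ_0 - θ*‖²/(αn²), 4‖θ_0 - θ*‖²/((α+β)n)}. -/
theorem stmt_12 (d : ℕ) (hd : 1 ≤ d)
    (H : Matrix (Fin d) (Fin d) ℝ) (hHsymm : H.IsSymm) (hHpd : H.PosDef)
    (L : ℝ) (hL0 : 0 < L)
    (hL : ∀ v : Fin d → ℝ, v ⬝ᵥ H.mulVec v ≤ L * (v ⬝ᵥ v))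
    (q θstar : Fin d → ℝ) (hθstar : H.mulVec θstar = q)
    (α β : ℝ) (hα0 : 0 < α) (hα : α ≤ 1 / L) (hβ0 : 0 ≤ β) (hβ : β ≤ 2 / L - α)
    (θ : ℕ → Fin d → ℝ) (hθ1 : θ 1 = θ 0)
    (η : ℕ → Fin d → ℝ) (hη : ∀ n, η n = (n : ℝ) • (θ n - θstar))
    (hrec : ∀ n : ℕ, 1 ≤ n →
      η (n + 1) = (η n - α • H.mulVec (η n))
        + ((η n - η (n - 1)) - β • H.mulVec (η n - η (n - 1)))) :
    ∀ n : ℕ, 1 ≤ n →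
      ((1 : ℝ) / 2 * (θ n ⬝ᵥ H.mulVec (θ n)) - q ⬝ᵥ θ n)
          - ((1 : ℝ) / 2 * (θstar ⬝ᵥ H.mulVec θstar) - q ⬝ᵥ θstar)
        ≤ min (((θ 0 - θstar) ⬝ᵥ (θ 0 - θstar)) / (α * (n : ℝ) ^ 2))
            (4 * ((θ 0 - θstar) ⬝ᵥ (θ 0 - θstar)) / ((α + β) * (n : ℝ))) :=
  stmt_12_general d H hHpd L hL0 hL q θstar hθstar α β hα0 hβ0 hβ θ hθ1 η hη hrec
end
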